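/- Rotation operator inversion up to stabilization: for a generating family (E, F) over L = ℝ, define F^↻(q, ξ, u) = F(u, ξ) − uq on E^↻ = L_q × W_ξ × L_u, and F^↺(q, ξ, u) = F(u, ξ) + uq. Then the double application (F^↻)^↺(q, ξ, u, v) = F(u, ξ) − vu + vq = F(u, ξ) + v(q − u), and after the fibered change of coordinates u ↦ u + q this family is equivalent to P(F)(q, ξ, u, v) = F(q + u, ξ) − uv, which is stably equivalent to (E, F) itself (the variables (u, v) contribute the nondegenerate quadratic form −uv after a further fibered diffeomorphism eliminating the F-dependence). -/

import Mathlib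

open intervalIntegral MeasureTheory Set Metric Filter
open scoped ENNReal NNReal

section Hadamard

variable {Ξ : Type*} [NormedAddCommGroup Ξ] [NormedSpace ℝ Ξ]

end Hadamard

section Hadamard2

variable {Ξ : Type*} [NormedAddCommGroup Ξ] [NormedSpace ℝ Ξ]

end Hadamard2

section Hadamard3

variable {Ξ : Type*} [NormedAddCommGroup Ξ] [NormedSpace ℝ Ξ]

/-- the Hadamard quotient, defined by averaging the partial derivative -/
noncomputable def hadamardG (F : ℝ × Ξ → ℝ) : ℝ × Ξ × ℝ → ℝ :=
  fun p => ∫ t in (0:ℝ)..1, fderiv ℝ F (p.1 + t * p.2.2, p.2.1) (1, 0)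

lemma contDiff_N (F : ℝ × Ξ → ℝ) (hF : ContDiff ℝ (⊤ : ℕ∞) F) :
    ContDiff ℝ (⊤ : ℕ∞) fun z : ℝ × Ξ => fderiv ℝ F z ((1 : ℝ), (0 : Ξ)) :=
  (hF.fderiv_right (by simp)).clm_apply contDiff_const

lemma hadamardG_key (F : ℝ × Ξ → ℝ) (hF : ContDiff ℝ (⊤ : ℕ∞) F) (q : ℝ) (ξ : Ξ) (u : ℝ) :
    u * hadamardG F (q, ξ, u) = F (q + u, ξ) - F (q, ξ) := by
  set N : ℝ × Ξ → ℝ := fun z => fderiv ℝ F z ((1 : ℝ), (0 : Ξ)) with hNdef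
  have hNc : Continuous N := (contDiff_N F hF).continuous
  have hderiv : ∀ t ∈ uIcc (0:ℝ) 1,
      HasDerivAt (fun s => F (q + s * u, ξ)) (u * N (q + t * u, ξ)) t := by
    intro t _
    have hcurve : HasDerivAt (fun s : ℝ => ((q + s * u, ξ) : ℝ × Ξ)) ((u, 0) : ℝ × Ξ) t :=
      by simpa using HasDerivAt.prodMk (((hasDerivAt_id t).mul_const u).const_add q) (hasDerivAt_const t ξ)
    have hinner : HasFDerivAt F (fderiv ℝ F (q + t * u, ξ)) (q + t * u, ξ) :=
      (hF.differentiable (by simp) (q + t * u, ξ)).hasFDerivAt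
    have h1 := hinner.comp_hasDerivAt t hcurve
    have h2 : fderiv ℝ F (q + t * u, ξ) ((u, 0) : ℝ × Ξ) = u * N (q + t * u, ξ) := by
      have : ((u, 0) : ℝ × Ξ) = u • (((1 : ℝ), (0 : Ξ)) : ℝ × Ξ) := by simp
      rw [this, ContinuousLinearMap.map_smul, hNdef, smul_eq_mul]
    rw [h2] at h1
    exact h1
  have hint : IntervalIntegrable (fun t => u * N (q + t * u, ξ)) volume 0 1 :=
    (continuous_const.mul (hNc.comp (by fun_prop))).intervalIntegrable 0 1
  have h3 := intervalIntegral.integral_eq_sub_of_hasDerivAt hderiv hint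
  rw [intervalIntegral.integral_const_mul] at h3
  simpa [hadamardG] using h3

theorem hadamardG_contDiff (F : ℝ × Ξ → ℝ) (hF : ContDiff ℝ (⊤ : ℕ∞) F) :
    ContDiff ℝ (⊤ : ℕ∞) (hadamardG F) := by
  set N : ℝ × Ξ → ℝ := fun z => fderiv ℝ F z ((1 : ℝ), (0 : Ξ)) with hNdef
  have hN : ContDiff ℝ (⊤ : ℕ∞) N := contDiff_N F hF
  let φ : ContDiffBump (0 : ℝ) := ⟨1, 2, by norm_num, by norm_num⟩
  let f : ℝ → ℝ := Set.indicator (Icc (0:ℝ) 1) (fun _ => (1:ℝ))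
  let G : ℝ × Ξ × ℝ → ℝ → ℝ := fun p s => φ (-s) * N (p.1 - s * p.2.2, p.2.1)
  have hf : LocallyIntegrable f volume :=
    ((integrableOn_const (by simp)).integrable_indicator measurableSet_Icc).locallyIntegrable
  have hG : ContDiffOn ℝ (⊤ : ℕ∞) (↿G) (univ ×ˢ univ) := by
    apply ContDiff.contDiffOn
    exact (φ.contDiff.comp (by fun_prop)).mul (hN.comp (by fun_prop))
  have hGs : ∀ p, ∀ x, p ∈ (univ : Set (ℝ × Ξ × ℝ)) → x ∉ closedBall (0:ℝ) 2 → G p x = 0 := by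
    intro p x _ hx
    have : φ (-x) = 0 := φ.zero_of_le_dist (by
      simp only [mem_closedBall, not_le, dist_zero_right] at hx
      show (2:ℝ) ≤ dist (-x) 0
      rw [dist_zero_right, norm_neg]; exact hx.le)
    simp [G, this]
  have hC := contDiffOn_convolution_right_with_param_comp (μ := volume)
    (ContinuousLinearMap.lsmul ℝ ℝ) (v := fun _ => (0:ℝ)) contDiffOn_const isOpen_univ
    (isCompact_closedBall 0 2) hGs hf hG
  rw [contDiffOn_univ] at hC
  convert hC using 1
  funext p
  rw [convolution_def]
  unfold hadamardG
  rw [intervalIntegral.integral_of_le zero_le_one, ← integral_Icc_eq_integral_Ioc,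
    ← MeasureTheory.integral_indicator measurableSet_Icc]
  congr 1
  funext t
  by_cases ht : t ∈ Icc (0:ℝ) 1
  · have h1 : φ (-(0 - t)) = 1 := φ.one_of_mem_closedBall (by
      show -(0 - t) ∈ closedBall (0:ℝ) 1
      rw [mem_closedBall, dist_zero_right, Real.norm_eq_abs, abs_le]
      constructor <;> linarith [ht.1, ht.2])
    simp only [f, G, Set.indicator_of_mem ht, ContinuousLinearMap.lsmul_apply, smul_eq_mul, h1,
      one_mul, hNdef]
    congr 3
    ring
  · simp [f, Set.indicator_of_notMem ht]

end Hadamard3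


/-- Rotation operator inversion up to stabilization.  For a generating family
`(E, F)` over `L = ℝ` with fiber `Ξ`, the rotations are
`F^↻(q,ξ,u) = F(u,ξ) − uq` and `F^↺(q,ξ,u) = F(u,ξ) + uq`.  Then:
(1) the double application is `(F^↻)^↺(q,ξ,u,v) = F(u,ξ) − vu + vq = F(u,ξ) + v(q−u)`;
(2) after the fibered change of coordinates `u ↦ u + q` it becomes
    `P(F)(q,ξ,u,v) = F(q+u,ξ) − uv`;
(3) `P(F)` is stably equivalent to `(E, F)`: there is a fibered
    diffeomorphism `ψ` (smooth, bijective, fixing the base coordinate `q`)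
    with `ψ^*(F(q+u,ξ) − uv) = F(q,ξ) − uv`, where `−uv` is a nondegenerate
    quadratic form in the extra variables `(u, v)`. -/
theorem rotation_inversion_up_to_stabilization
    {Ξ : Type*} [NormedAddCommGroup Ξ] [NormedSpace ℝ Ξ]
    (F : ℝ × Ξ → ℝ) (hF : ContDiff ℝ (⊤ : ℕ∞) F) :
    (∀ (q u v : ℝ) (ξ : Ξ), F (u, ξ) - v * u + v * q = F (u, ξ) + v * (q - u)) ∧
    (∀ (q u v : ℝ) (ξ : Ξ), F (u + q, ξ) + v * (q - (u + q)) = F (q + u, ξ) - u * v) ∧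
    (∃ ψ : ℝ × Ξ × ℝ × ℝ → ℝ × Ξ × ℝ × ℝ,
      Function.Bijective ψ ∧ ContDiff ℝ (⊤ : ℕ∞) ψ ∧ (∀ x, (ψ x).1 = x.1) ∧
      ∀ x : ℝ × Ξ × ℝ × ℝ,
        F ((ψ x).1 + (ψ x).2.2.1, (ψ x).2.1) - (ψ x).2.2.1 * (ψ x).2.2.2
          = F (x.1, x.2.1) - x.2.2.1 * x.2.2.2) := by
  refine ⟨fun q u v ξ => by ring, fun q u v ξ => by rw [add_comm u q]; ring, ?_⟩
  set g : ℝ × Ξ × ℝ → ℝ := hadamardG F with hgdef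
  have hg : ContDiff ℝ (⊤ : ℕ∞) g :=
    hadamardG_contDiff F hF
  have key : ∀ (q : ℝ) (ξ : Ξ) (u : ℝ), u * g (q, ξ, u) = F (q + u, ξ) - F (q, ξ) :=
    hadamardG_key F hF
  refine ⟨fun x => (x.1, x.2.1, x.2.2.1, x.2.2.2 + g (x.1, x.2.1, x.2.2.1)),
    ?_, ?_, fun x => rfl, ?_⟩
  · have hli : Function.LeftInverse
        (fun x : ℝ × Ξ × ℝ × ℝ => (x.1, x.2.1, x.2.2.1, x.2.2.2 - g (x.1, x.2.1, x.2.2.1)))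
        (fun x : ℝ × Ξ × ℝ × ℝ => (x.1, x.2.1, x.2.2.1, x.2.2.2 + g (x.1, x.2.1, x.2.2.1))) := by
      intro x; simp
    have hri : Function.RightInverse
        (fun x : ℝ × Ξ × ℝ × ℝ => (x.1, x.2.1, x.2.2.1, x.2.2.2 - g (x.1, x.2.1, x.2.2.1)))
        (fun x : ℝ × Ξ × ℝ × ℝ => (x.1, x.2.1, x.2.2.1, x.2.2.2 + g (x.1, x.2.1, x.2.2.1))) := by
      intro x; simp
    exact ⟨hli.injective, hri.surjective⟩
  · exact contDiff_fst.prodMk ((contDiff_fst.comp contDiff_snd).prodMk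
      (((contDiff_fst.comp (contDiff_snd.comp contDiff_snd))).prodMk
        ((contDiff_snd.comp (contDiff_snd.comp contDiff_snd)).add
          (hg.comp (contDiff_fst.prodMk ((contDiff_fst.comp contDiff_snd).prodMk
            (contDiff_fst.comp (contDiff_snd.comp contDiff_snd))))))))
  · rintro ⟨q, ξ, u, w⟩
    have hk := key q ξ u
    have hexp : u * (w + g (q, ξ, u)) = u * w + u * g (q, ξ, u) := by ring
    simp only []
    rw [hexp, hk]
    ring
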